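/- arXiv:1010.3619 — 3 statements merged into one kernel-verified Lean document; each statement's English description precedes it below -/
import Mathlib

section
/- For every k ≥ 0 and 0 ≤ p ≤ 1, the function L_k(p) := ((k+p)^(α+1) - k^(α+1)) / ((k+1)^(α+1) - k^(α+1)) is increasing in k; that is, for k' ≥ k'' ≥ 0 and all p ∈ [0,1], L_{k'}(p) ≥ L_{k''}(p). -/
/-!
Writing `L_k(p) = ∫₀ᵖ (k+t)^α dt / ∫₀¹ (k+t)^α dt`, the claim compares the distribution functions of
two densities on `[0,1]`. For `k'' ≤ k'` the likelihood ratio `((k'+t)/(k''+t))^α` is decreasing in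
`t`, so the density of `k'` puts relatively more mass on every initial segment `[0,p]`.
-/

open Set intervalIntegral
open MeasureTheory (volume)

section CrossRatio

variable {f g : ℝ → ℝ} {a p b : ℝ}

/-- `hcross` says that `f / g` is decreasing; comparing both integrands with their values at the
pivot `p` gives `g ≤ f · g(p)/f(p)` on `[a,p]` and `f ≤ g · f(p)/g(p)` on `[p,b]`. -/
theorem integral_mul_integral_le_of_cross_le (hap : a ≤ p) (hpb : p ≤ b)
    (hfi : IntervalIntegrable f volume a b) (hgi : IntervalIntegrable g volume a b)
    (hf0 : ∀ t ∈ Icc a b, 0 ≤ f t) (hfp : 0 < f p) (hgp : 0 < g p)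
    (hcross : ∀ s t, a ≤ s → s ≤ t → t ≤ b → g s * f t ≤ f s * g t) :
    (∫ t in a..p, g t) * (∫ t in p..b, f t) ≤ (∫ t in a..p, f t) * (∫ t in p..b, g t) := by
  have sub_left := uIcc_subset_uIcc_left (mem_uIcc_of_le hap hpb)
  have sub_right := uIcc_subset_uIcc_right (mem_uIcc_of_le hap hpb)
  have left : (∫ t in a..p, g t) * f p ≤ (∫ t in a..p, f t) * g p := by
    rw [← integral_mul_const, ← integral_mul_const]
    refine integral_mono_on hap ((hgi.mono_set sub_left).mul_const _)
      ((hfi.mono_set sub_left).mul_const _) fun s hs => hcross s p hs.1 hs.2 hpb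
  have right : (∫ t in p..b, f t) * g p ≤ (∫ t in p..b, g t) * f p := by
    rw [← integral_mul_const, ← integral_mul_const]
    refine integral_mono_on hpb ((hfi.mono_set sub_right).mul_const _)
      ((hgi.mono_set sub_right).mul_const _) fun t ht => by linarith [hcross p t hap ht.1 ht.2]
  have hf_left : 0 ≤ ∫ t in a..p, f t :=
    integral_nonneg hap fun t ht => hf0 t ⟨ht.1, ht.2.trans hpb⟩
  have hf_right : 0 ≤ ∫ t in p..b, f t :=
    integral_nonneg hpb fun t ht => hf0 t ⟨hap.trans ht.1, ht.2⟩
  have product := mul_le_mul left right (mul_nonneg hf_right hgp.le)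
    (mul_nonneg hf_left hgp.le)
  refine le_of_mul_le_mul_right ?_ (mul_pos hfp hgp)
  linarith

theorem integral_div_integral_le_of_cross_le (hap : a ≤ p) (hpb : p ≤ b)
    (hfi : IntervalIntegrable f volume a b) (hgi : IntervalIntegrable g volume a b)
    (hf0 : ∀ t ∈ Icc a b, 0 ≤ f t) (hfp : 0 < f p) (hgp : 0 < g p)
    (hcross : ∀ s t, a ≤ s → s ≤ t → t ≤ b → g s * f t ≤ f s * g t)
    (hf_pos : 0 < ∫ t in a..b, f t) (hg_pos : 0 < ∫ t in a..b, g t) :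
    (∫ t in a..p, g t) / (∫ t in a..b, g t) ≤ (∫ t in a..p, f t) / (∫ t in a..b, f t) := by
  have hp := mem_uIcc_of_le hap hpb
  have split {h : ℝ → ℝ} (hi : IntervalIntegrable h volume a b) :
      ∫ t in a..b, h t = (∫ t in a..p, h t) + ∫ t in p..b, h t :=
    (integral_add_adjacent_intervals (hi.mono_set (uIcc_subset_uIcc_left hp))
      (hi.mono_set (uIcc_subset_uIcc_right hp))).symm
  rw [div_le_div_iff₀ hg_pos hf_pos, split hfi, split hgi]
  linarith [integral_mul_integral_le_of_cross_le hap hpb hfi hgi hf0 hfp hgp hcross]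

end CrossRatio

theorem integral_add_rpow {α : ℝ} (hα : -1 < α) (k a b : ℝ) :
    ∫ t in a..b, (k + t) ^ α = ((k + b) ^ (α + 1) - (k + a) ^ (α + 1)) / (α + 1) := by
  rw [integral_comp_add_left (· ^ α) k]
  exact integral_rpow (Or.inl hα)

theorem sub_rpow_div_sub_rpow_eq_integral_div_integral {α : ℝ} (hα : -1 < α) (k p : ℝ) :
    ((k + p) ^ (α + 1) - k ^ (α + 1)) / ((k + 1) ^ (α + 1) - k ^ (α + 1)) =
      (∫ t in (0 : ℝ)..p, (k + t) ^ α) / ∫ t in (0 : ℝ)..1, (k + t) ^ α := by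
  rw [integral_add_rpow hα, integral_add_rpow hα, add_zero,
    div_div_div_cancel_right₀ (by linarith : α + 1 ≠ 0)]

theorem add_rpow_mul_add_rpow_le {α k' k'' s t : ℝ} (hα : 0 ≤ α) (hk'' : 0 ≤ k'')
    (hkk : k'' ≤ k') (hs : 0 ≤ s) (hst : s ≤ t) :
    (k'' + s) ^ α * (k' + t) ^ α ≤ (k' + s) ^ α * (k'' + t) ^ α := by
  have hk' : 0 ≤ k' := hk''.trans hkk
  have ht : 0 ≤ t := hs.trans hst
  rw [← Real.mul_rpow (by positivity) (by positivity),
    ← Real.mul_rpow (by positivity) (by positivity)]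
  refine Real.rpow_le_rpow (by positivity) ?_ hα
  nlinarith [mul_nonneg (sub_nonneg.2 hkk) (sub_nonneg.2 hst)]

theorem continuous_add_rpow {α : ℝ} (hα : 0 ≤ α) (k : ℝ) : Continuous fun t : ℝ => (k + t) ^ α :=
  (Real.continuous_rpow_const hα).comp (continuous_const.add continuous_id)

theorem integral_add_rpow_pos {α k : ℝ} (hα : 0 ≤ α) (hk : 0 ≤ k) :
    0 < ∫ t in (0 : ℝ)..1, (k + t) ^ α :=
  intervalIntegral_pos_of_pos_on ((continuous_add_rpow hα k).intervalIntegrable 0 1)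
    (fun t ht => Real.rpow_pos_of_pos (by linarith [ht.1]) α) zero_lt_one

theorem stmt0 (α : ℝ) (hα : 0 < α) (k' k'' p : ℝ)
    (hk'' : 0 ≤ k'') (hkk : k'' ≤ k') (hp : p ∈ Set.Icc (0:ℝ) 1) :
    ((k'' + p) ^ (α+1) - k'' ^ (α+1)) / ((k'' + 1) ^ (α+1) - k'' ^ (α+1)) ≤
      ((k' + p) ^ (α+1) - k' ^ (α+1)) / ((k' + 1) ^ (α+1) - k' ^ (α+1)) := by
  obtain ⟨hp0, hp1⟩ := hp
  rcases hp0.eq_or_lt with rfl | hp_pos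
  · simp
  have hk' : 0 ≤ k' := hk''.trans hkk
  have hα' : -1 < α := by linarith
  rw [sub_rpow_div_sub_rpow_eq_integral_div_integral hα',
    sub_rpow_div_sub_rpow_eq_integral_div_integral hα']
  exact integral_div_integral_le_of_cross_le hp0 hp1
    ((continuous_add_rpow hα.le k').intervalIntegrable 0 1)
    ((continuous_add_rpow hα.le k'').intervalIntegrable 0 1)
    (fun t ht => Real.rpow_nonneg (by linarith [ht.1]) α)
    (Real.rpow_pos_of_pos (by linarith) α) (Real.rpow_pos_of_pos (by linarith) α)
    (fun s t hs hst _ => add_rpow_mul_add_rpow_le hα.le hk'' hkk hs hst)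
    (integral_add_rpow_pos hα.le hk') (integral_add_rpow_pos hα.le hk'')
end

section
/- For α > 0, k ≥ 0 and p ∈ [0,1], the quantity (k+p)^α ((k+1)^α (1-p) + k^α p) - k^α (k+1)^α is nonnegative, and is strictly positive for p ∈ (0,1) and k > 0. -/
/-!
Since `k + p = (1 - p) k + p (k + 1)`, dividing the quantity by the positive number
`(k + p)^α k^α (k + 1)^α` (when `k > 0`) leaves
`(1 - p) k^(-α) + p (k + 1)^(-α) - ((1 - p) k + p (k + 1))^(-α)`,
which is nonnegative, and positive for `0 < p < 1`, by strict convexity of `x ↦ x^(-α)` on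
`(0, ∞)`. At `k = 0` the quantity reduces to `p^α (1 - p)`.
-/

open Real Set

theorem strictConvexOn_rpow_of_neg {p : ℝ} (hp : p < 0) :
    StrictConvexOn ℝ (Ioi 0) fun x : ℝ ↦ x ^ p := by
  have hexp : ConvexOn ℝ univ fun u : ℝ ↦ exp (p * u) := by
    simpa [Function.comp_def] using convexOn_exp.comp_linearMap (LinearMap.mulLeft ℝ p)
  have hanti : StrictAntiOn (fun u : ℝ ↦ exp (p * u)) univ :=
    fun u _ v _ huv ↦ exp_lt_exp.2 (mul_lt_mul_of_neg_left huv hp)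
  have himage : log '' Ioi 0 = univ :=
    eq_univ_of_forall fun y ↦ ⟨exp y, exp_pos y, log_exp y⟩
  rw [← himage] at hexp hanti
  exact (hexp.comp_strictConcaveOn strictConcaveOn_log_Ioi hanti).congr fun x hx ↦ by
    simp [rpow_def_of_pos hx, mul_comm]

theorem rpow_mul_add_sub_eq_mul_rpow_neg {α x y c : ℝ} (hx : 0 < x) (hy : 0 < y) (hc : 0 < c)
    (s t : ℝ) :
    c ^ α * (y ^ α * s + x ^ α * t) - x ^ α * y ^ α =
      c ^ α * x ^ α * y ^ α * (s * x ^ (-α) + t * y ^ (-α) - c ^ (-α)) := by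
  simp only [rpow_neg hx.le, rpow_neg hy.le, rpow_neg hc.le]
  field_simp

variable {α x y t : ℝ}

theorem rpow_mul_rpow_le_rpow_convexComb_mul (hα : 0 < α) (hx : 0 < x) (hy : 0 < y)
    (ht₀ : 0 ≤ t) (ht₁ : t ≤ 1) :
    x ^ α * y ^ α ≤ ((1 - t) * x + t * y) ^ α * (y ^ α * (1 - t) + x ^ α * t) := by
  have hc : 0 < (1 - t) * x + t * y :=
    convex_Ioi (0 : ℝ) hx hy (sub_nonneg.2 ht₁) ht₀ (sub_add_cancel 1 t)
  have jensen := (strictConvexOn_rpow_of_neg (neg_neg_of_pos hα)).convexOn.2 hx hy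
    (sub_nonneg.2 ht₁) ht₀ (by ring)
  simp only [smul_eq_mul] at jensen
  rw [← sub_nonneg, rpow_mul_add_sub_eq_mul_rpow_neg hx hy hc]
  exact mul_nonneg (by positivity) (sub_nonneg.2 jensen)

theorem rpow_mul_rpow_lt_rpow_convexComb_mul (hα : 0 < α) (hx : 0 < x) (hy : 0 < y)
    (hxy : x ≠ y) (ht₀ : 0 < t) (ht₁ : t < 1) :
    x ^ α * y ^ α < ((1 - t) * x + t * y) ^ α * (y ^ α * (1 - t) + x ^ α * t) := by
  have hc : 0 < (1 - t) * x + t * y :=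
    convex_Ioi (0 : ℝ) hx hy (sub_pos.2 ht₁).le ht₀.le (sub_add_cancel 1 t)
  have jensen := (strictConvexOn_rpow_of_neg (neg_neg_of_pos hα)).2 hx hy hxy
    (sub_pos.2 ht₁) ht₀ (by ring)
  simp only [smul_eq_mul] at jensen
  rw [← sub_pos, rpow_mul_add_sub_eq_mul_rpow_neg hx hy hc]
  exact mul_pos (by positivity) (sub_pos.2 jensen)

theorem stmt1 (α k p : ℝ) (hα : 0 < α) (hk : 0 ≤ k) (hp : p ∈ Set.Icc (0:ℝ) 1) :
    0 ≤ (k + p) ^ α * ((k + 1) ^ α * (1 - p) + k ^ α * p) - k ^ α * (k + 1) ^ α ∧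
    (p ∈ Set.Ioo (0:ℝ) 1 → 0 < k →
      0 < (k + p) ^ α * ((k + 1) ^ α * (1 - p) + k ^ α * p) - k ^ α * (k + 1) ^ α) := by
  have hcomb : k + p = (1 - p) * k + p * (k + 1) := by ring
  rw [hcomb, sub_nonneg, sub_pos]
  refine ⟨?_, fun hp' hk' ↦ rpow_mul_rpow_lt_rpow_convexComb_mul hα hk' (by linarith)
    (by linarith) hp'.1 hp'.2⟩
  rcases hk.eq_or_lt with rfl | hk'
  · simp only [zero_rpow hα.ne', zero_mul, mul_zero, add_zero, zero_add, one_rpow, one_mul, mul_one]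
    exact mul_nonneg (rpow_nonneg hp.1 _) (sub_nonneg.2 hp.2)
  · exact rpow_mul_rpow_le_rpow_convexComb_mul hα hk' (by linarith) hp.1 hp.2
end

section
/- For α > 0 there exists M' > 0 such that for all integers t ≥ 1 and all real k ≥ 0, t·((k+1)t)^α / (∑_{l=⌈kt⌉+1}^{⌊(k+1)t⌋} l^α) ≤ M'. -/
/-!
Write `m = ⌈k t⌉₊` and `N = ⌊(k + 1) t⌋₊`. When the sum is nonempty, `N ≥ 1` gives
`(k + 1) t < N + 1 ≤ 2 N`, and by integrality the range `(m, N]` contains at least `t / 2`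
integers. At least half of them lie in the upper half `[N / 2, N]` of the range, where each
summand is at least `(N / 2)^α`. Hence the sum is at least `(t / 4) (N / 2)^α`, while the
numerator is at most `t (2 N)^α = 4^α t (N / 2)^α`, so `M = 4 · 4^α` works.
-/

open Finset

section Floor

variable {R : Type*} [Semiring R] [LinearOrder R] [FloorSemiring R] [IsStrictOrderedRing R]

lemma add_ceil_lt_floor_add_two {x : R} (hx : 0 ≤ x) (t : ℕ) :
    t + ⌈x⌉₊ < ⌊x + t⌋₊ + 2 := by
  have hceil := Nat.ceil_lt_add_one hx
  have hfloor := Nat.lt_floor_add_one (x + t)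
  have : ((t + ⌈x⌉₊ : ℕ) : R) < ((⌊x + t⌋₊ + 2 : ℕ) : R) := by
    push_cast
    calc (t : R) + ⌈x⌉₊ < x + t + 1 := by
          rw [add_comm x, add_assoc]; gcongr
      _ < ⌊x + t⌋₊ + 1 + 1 := add_lt_add_left hfloor 1
      _ = ⌊x + t⌋₊ + 2 := by rw [add_assoc, one_add_one_eq_two]
  exact_mod_cast this

lemma le_two_mul_floor {x : R} (hx : 1 ≤ ⌊x⌋₊) : x ≤ 2 * ⌊x⌋₊ := by
  have hfloor := Nat.lt_floor_add_one x
  have hone : (1 : R) ≤ ⌊x⌋₊ := by exact_mod_cast hx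
  calc x ≤ ⌊x⌋₊ + 1 := hfloor.le
    _ ≤ ⌊x⌋₊ + ⌊x⌋₊ := by gcongr
    _ = 2 * ⌊x⌋₊ := (two_mul _).symm

end Floor

lemma sub_mul_half_rpow_le_two_mul_sum_Icc {α : ℝ} (hα : 0 ≤ α) {m N : ℕ} (hmN : m ≤ N) :
    ((N : ℝ) - m) * ((N : ℝ) / 2) ^ α ≤ 2 * ∑ l ∈ Icc (m + 1) N, (l : ℝ) ^ α := by
  set p := (m + N + 2) / 2
  have hcard : (N : ℝ) - m ≤ 2 * #(Icc p N) := by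
    rw [Nat.card_Icc, ← Nat.cast_sub hmN]
    exact_mod_cast (by omega : N - m ≤ 2 * (N + 1 - p))
  have hterm : ∀ l ∈ Icc p N, ((N : ℝ) / 2) ^ α ≤ (l : ℝ) ^ α := by
    intro l hl
    have hpl : p ≤ l := (mem_Icc.mp hl).1
    have hNl : (N : ℝ) ≤ 2 * l := by exact_mod_cast (by omega : N ≤ 2 * l)
    exact Real.rpow_le_rpow (by positivity) (by linarith) hα
  have hsub : ∑ l ∈ Icc p N, (l : ℝ) ^ α ≤ ∑ l ∈ Icc (m + 1) N, (l : ℝ) ^ α :=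
    sum_le_sum_of_subset_of_nonneg (Icc_subset_Icc (by omega) le_rfl)
      (fun l _ _ => by positivity)
  calc ((N : ℝ) - m) * ((N : ℝ) / 2) ^ α ≤ 2 * #(Icc p N) * ((N : ℝ) / 2) ^ α := by gcongr
    _ = 2 * (#(Icc p N) • ((N : ℝ) / 2) ^ α) := by rw [nsmul_eq_mul]; ring
    _ ≤ 2 * ∑ l ∈ Icc p N, (l : ℝ) ^ α := by gcongr; exact card_nsmul_le_sum _ _ _ hterm
    _ ≤ 2 * ∑ l ∈ Icc (m + 1) N, (l : ℝ) ^ α := by gcongr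

theorem stmt19 (α : ℝ) (hα : 0 < α) :
    ∃ M > (0:ℝ), ∀ t : ℕ, 1 ≤ t → ∀ k : ℝ, 0 ≤ k →
      (t : ℝ) * ((k + 1) * t) ^ α / (∑ l ∈ Finset.Icc (⌈k * t⌉₊ + 1) ⌊(k + 1) * t⌋₊, (l : ℝ) ^ α)
        ≤ M := by
  refine ⟨4 * 4 ^ α, by positivity, fun t ht k hk => ?_⟩
  set m := ⌈k * t⌉₊
  set N := ⌊(k + 1) * t⌋₊
  rcases le_or_gt N m with hNm | hmN
  · rw [Icc_eq_empty (by omega), sum_empty, div_zero]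
    positivity
  have hlen : t + m < N + 2 := by
    simpa only [N, add_one_mul] using add_ceil_lt_floor_add_two (by positivity : 0 ≤ k * t) t
  have htN : (t : ℝ) ≤ 2 * ((N : ℝ) - m) := by
    rw [← Nat.cast_sub hmN.le]; exact_mod_cast (by omega : t ≤ 2 * (N - m))
  have hkN : (k + 1) * t ≤ 2 * N := le_two_mul_floor (by omega)
  have hsum := sub_mul_half_rpow_le_two_mul_sum_Icc hα.le hmN.le
  refine div_le_of_le_mul₀ (by positivity) (by positivity) ?_
  calc (t : ℝ) * ((k + 1) * t) ^ α ≤ t * (4 * ((N : ℝ) / 2)) ^ α := by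
        gcongr ?_ * ?_ ^ _; linarith
    _ = 4 ^ α * (t * ((N : ℝ) / 2) ^ α) := by
        rw [Real.mul_rpow (by norm_num) (by positivity)]; ring
    _ ≤ 4 ^ α * (2 * (((N : ℝ) - m) * ((N : ℝ) / 2) ^ α)) := by
        rw [← mul_assoc 2]; gcongr
    _ ≤ 4 * 4 ^ α * ∑ l ∈ Icc (m + 1) N, (l : ℝ) ^ α := by
        linarith [mul_le_mul_of_nonneg_left hsum (by positivity : (0 : ℝ) ≤ 4 ^ α)]
end
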